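/- Let D : ℕ → ℕ be a divisibility sequence (i.e., n ∣ m implies D n ∣ D m) with D n ≥ 1 for all n ≥ 1, and let m ≥ 1. Suppose that for every prime p and every n ≥ 1 with p ∣ D n, one has padicValNat p (D (m*n)) = padicValNat p (m * D n). Then for all 1 ≤ k < ℓ, gcd(D (m^k) / D (m^(k-1)), D (m^ℓ) / D (m^(ℓ-1))) divides m. -/
import Mathlib


theorem gefn_coprimality (D : ℕ → ℕ)
    (hdiv : ∀ n m : ℕ, n ∣ m → D n ∣ D m)
    (hpos : ∀ n : ℕ, 1 ≤ n → 1 ≤ D n)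
    (m : ℕ) (hm : 1 ≤ m)
    (hval : ∀ p n : ℕ, p.Prime → 1 ≤ n → p ∣ D n →
      padicValNat p (D (m * n)) = padicValNat p (m * D n))
    (k l : ℕ) (hk : 1 ≤ k) (hkl : k < l) :
    Nat.gcd (D (m ^ k) / D (m ^ (k - 1))) (D (m ^ l) / D (m ^ (l - 1))) ∣ m := by
  have hmpow : ∀ j : ℕ, 1 ≤ m ^ j := fun j => Nat.one_le_pow j m hm
  have hDpos : ∀ j : ℕ, 0 < D (m ^ j) := fun j => hpos _ (hmpow j)
  have hDdvd : ∀ i j : ℕ, i ≤ j → D (m ^ i) ∣ D (m ^ j) :=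
    fun i j hij => hdiv _ _ (pow_dvd_pow m hij)
  -- key valuation step
  have key : ∀ p : ℕ, p.Prime → p ∣ D (m ^ k) → ∀ j, k ≤ j →
      padicValNat p (D (m ^ (j + 1))) = padicValNat p m + padicValNat p (D (m ^ j)) := by
    intro p pp hpk j hj
    haveI : Fact p.Prime := ⟨pp⟩
    have hpj : p ∣ D (m ^ j) := hpk.trans (hDdvd k j hj)
    have h1 := hval p (m ^ j) pp (hmpow j) hpj
    have h2 : m * m ^ j = m ^ (j + 1) := by ring
    rw [h2] at h1
    rw [h1, padicValNat.mul (by omega) (hDpos j).ne']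
  have hFk : 0 < D (m ^ k) / D (m ^ (k - 1)) :=
    Nat.div_pos (Nat.le_of_dvd (hDpos k) (hDdvd _ _ (by omega))) (hDpos (k - 1))
  have hFl : 0 < D (m ^ l) / D (m ^ (l - 1)) :=
    Nat.div_pos (Nat.le_of_dvd (hDpos l) (hDdvd _ _ (by omega))) (hDpos (l - 1))
  rw [← Nat.factorization_le_iff_dvd (Nat.gcd_ne_zero_left hFk.ne') (by omega)]
  rw [Nat.factorization_gcd hFk.ne' hFl.ne']
  intro p
  by_cases pp : p.Prime
  · haveI : Fact p.Prime := ⟨pp⟩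
    simp only [Finsupp.inf_apply]
    rw [Nat.factorization_def _ pp, Nat.factorization_def _ pp, Nat.factorization_def _ pp]
    by_cases hpk : p ∣ D (m ^ k) / D (m ^ (k - 1))
    · have hpDk : p ∣ D (m ^ k) :=
        hpk.trans (Nat.div_dvd_of_dvd (hDdvd _ _ (by omega)))
      have hl : padicValNat p (D (m ^ l) / D (m ^ (l - 1))) = padicValNat p m := by
        have hkey := key p pp hpDk (l - 1) (by omega)
        have : l - 1 + 1 = l := by omega
        rw [this] at hkey
        rw [padicValNat.div_of_dvd (hDdvd _ _ (by omega)), hkey]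
        omega
      calc min (padicValNat p (D (m ^ k) / D (m ^ (k - 1))))
            (padicValNat p (D (m ^ l) / D (m ^ (l - 1))))
          ≤ padicValNat p (D (m ^ l) / D (m ^ (l - 1))) := min_le_right _ _
        _ ≤ padicValNat p m := le_of_eq hl
    · have : padicValNat p (D (m ^ k) / D (m ^ (k - 1))) = 0 :=
        padicValNat.eq_zero_of_not_dvd hpk
      omega
  · simp [Nat.factorization_eq_zero_of_not_prime _ pp]
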